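/- arXiv:math/9906121 — 2 statements merged into one kernel-verified Lean document; each statement's English description precedes it below -/
import Mathlib

section
/- Every element of the ℤ-submodule of ℚ[q,q⁻¹] generated by the half quantum integers admits a unique positive normal form: if P ∈ ℚ[q,q⁻¹] is a ℤ-linear combination of the elements (1/2)·[m]_q (m ∈ ℤ), then there exists a unique finitely supported function n : ℤ → ℚ such that every value n_m is a nonnegative half-integer (i.e. 2·n_m is a nonnegative integer), n_0 = 0, for every m ∈ ℤ the implication (n_m > 0 → n_{−m} = 0) holds, and P = Σ_{m∈ℤ} n_m·[m]_q. -/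
/-!
Multiplication by `q - q⁻¹` is injective on `ℚ[q,q⁻¹]` and sends `∑ n_m [m]_q` to
`∑ (n_m - n_{-m}) q^m`. So `P = ∑ n_m [m]_q` says exactly that `n_k - n_{-k} = a_k`, where `a_k` is
the `k`-th coefficient of `(q - q⁻¹) P`. For `P` in the span of the `(1/2) [m]_q`, `a` is an odd
function with values in `(1/2) ℤ`, and the remaining conditions on `n` (nonnegative, never
positive at both `m` and `-m`) single out `n = a⁺`.
-/

open LaurentPolynomial

namespace LaurentPolynomial

variable {R : Type*} [CommRing R]

theorem T_one_sub_T_neg_one_ne_zero [Nontrivial R] : (T 1 - T (-1) : R[T;T⁻¹]) ≠ 0 := by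
  intro h
  simpa using congrArg (fun p : R[T;T⁻¹] => p.coeff 1) h

theorem coeff_T_one_sub_T_neg_one_mul_sum_smul {qI : ℤ → R[T;T⁻¹]}
    (hqI : ∀ m, (T 1 - T (-1)) * qI m = T m - T (-m)) (n : ℤ →₀ R) (k : ℤ) :
    ((T 1 - T (-1)) * n.sum fun m c => c • qI m).coeff k = n k - n (-k) := by
  simp only [Finsupp.mul_sum, mul_smul_comm, hqI]
  simp [AddMonoidAlgebra.coeff_finsuppSum, mul_sub, Finsupp.sum_sub, neg_eq_iff_eq_neg]

theorem eq_sum_smul_iff [IsDomain R] {qI : ℤ → R[T;T⁻¹]}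
    (hqI : ∀ m, (T 1 - T (-1)) * qI m = T m - T (-m)) (P : R[T;T⁻¹]) (n : ℤ →₀ R) :
    P = (n.sum fun m c => c • qI m) ↔ ∀ k, ((T 1 - T (-1)) * P).coeff k = n k - n (-k) := by
  simp_rw [← coeff_T_one_sub_T_neg_one_mul_sum_smul hqI, ← Finsupp.ext_iff,
    AddMonoidAlgebra.coeff_inj, mul_right_inj' T_one_sub_T_neg_one_ne_zero]

end LaurentPolynomial

theorem Submodule.exists_finsupp_of_mem_span_range_half_smul {ι M : Type*} [AddCommGroup M]
    [Module ℚ M] {v : ι → M} {x : M}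
    (hx : x ∈ Submodule.span ℤ (Set.range fun i => (2⁻¹ : ℚ) • v i)) :
    ∃ z : ι →₀ ℤ, x = (z.mapRange (fun k : ℤ => (k : ℚ) / 2) (by simp)).sum fun i c => c • v i := by
  obtain ⟨z, rfl⟩ := Finsupp.mem_span_range_iff_exists_finsupp.mp hx
  refine ⟨z, ?_⟩
  rw [Finsupp.sum_mapRange_index (h := fun i c => c • v i) fun _ => zero_smul ℚ _]
  simp only [← Int.cast_smul_eq_zsmul ℚ, smul_smul, div_eq_mul_inv]

theorem two_mul_posPart_eq_toNat {K : Type*} [Ring K] [LinearOrder K] [IsStrictOrderedRing K]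
    {x : K} {j : ℤ} (h : 2 * x = j) : 2 * x⁺ = j.toNat := by
  rcases le_total 0 x with hx | hx
  · have hj : 0 ≤ j := by exact_mod_cast h ▸ (by positivity : (0 : K) ≤ 2 * x)
    rw [posPart_of_nonneg hx, h, ← Int.cast_natCast, Int.toNat_of_nonneg hj]
  · have hj : j ≤ 0 := by exact_mod_cast h ▸ mul_nonpos_of_nonneg_of_nonpos zero_le_two hx
    rw [posPart_of_nonpos hx, Int.toNat_of_nonpos hj, mul_zero, Nat.cast_zero]


theorem Finsupp.posPart_apply {ι α : Type*} [AddGroup α] [Lattice α] (f : ι →₀ α) (i : ι) :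
    f⁺ i = (f i)⁺ := rfl

theorem Finsupp.eq_posPart_iff_of_antisymm {ι α : Type*} [InvolutiveNeg ι] [AddCommGroup α]
    [LinearOrder α] [IsOrderedAddMonoid α] {a n : ι →₀ α} (ha : ∀ k, a (-k) = -a k) :
    n = a⁺ ↔ (∀ m, 0 ≤ n m) ∧ (∀ m, 0 < n m → n (-m) = 0) ∧ ∀ k, n k - n (-k) = a k := by
  constructor
  · rintro rfl
    refine ⟨fun m => posPart_nonneg _, fun m hm => ?_, fun k => ?_⟩
    · rw [posPart_apply, posPart_pos_iff] at hm
      rw [posPart_apply, ha, posPart_eq_zero, neg_nonpos]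
      exact hm.le
    · rw [posPart_apply, posPart_apply, ha, posPart_neg, posPart_sub_negPart]
  · rintro ⟨hnonneg, hdisj, hdiff⟩
    ext k
    rw [posPart_apply, ← hdiff]
    rcases (hnonneg (-k)).eq_or_lt with h | h
    · rw [← h, sub_zero, posPart_of_nonneg (hnonneg k)]
    · have hk : n k = 0 := by simpa using hdisj (-k) h
      rw [hk, zero_sub, posPart_of_nonpos (neg_nonpos.mpr h.le)]

/-- Unique positive normal form: every element `P` of the `ℤ`-submodule of `ℚ[q,q⁻¹]`
generated by the half quantum integers `(1/2)·[m]_q` can be written uniquely as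
`P = ∑_m n_m · [m]_q` where each `n_m` is a nonnegative half-integer, `n_0 = 0`,
and `n_m > 0 → n_{-m} = 0`. Here `qI : ℤ → ℚ[q,q⁻¹]` is the family of quantum
integers, characterized by `(q - q⁻¹) * qI m = q^m - q^(-m)`. -/
theorem half_quantum_integer_combination_normal_form
    (qI : ℤ → LaurentPolynomial ℚ)
    (hqI : ∀ m : ℤ, ((T 1 : LaurentPolynomial ℚ) - T (-1)) * qI m = T m - T (-m))
    (P : LaurentPolynomial ℚ)
    (hP : P ∈ Submodule.span ℤ (Set.range fun m : ℤ => (2⁻¹ : ℚ) • qI m)) :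
    ∃! n : ℤ →₀ ℚ,
      (∀ m : ℤ, ∃ k : ℕ, 2 * n m = (k : ℚ)) ∧
      n 0 = 0 ∧
      (∀ m : ℤ, 0 < n m → n (-m) = 0) ∧
      P = n.sum fun m c => c • qI m := by
  obtain ⟨z, hz⟩ := Submodule.exists_finsupp_of_mem_span_range_half_smul hP
  set a := ((T 1 - T (-1)) * P).coeff
  have two_mul_a : ∀ k, 2 * a k = ((z k - z (-k) : ℤ) : ℚ) := fun k => by
    simp only [a, hz, coeff_T_one_sub_T_neg_one_mul_sum_smul hqI, Finsupp.mapRange_apply,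
      Int.cast_sub]
    ring
  have a_neg : ∀ k, a (-k) = -a k := fun k => by
    have h := two_mul_a (-k)
    rw [neg_neg, ← neg_sub, Int.cast_neg, ← two_mul_a k] at h
    linarith
  have normal_form_iff (n : ℤ →₀ ℚ) := Finsupp.eq_posPart_iff_of_antisymm (n := n) a_neg
  obtain ⟨-, posPart_disjoint, posPart_sub⟩ := (normal_form_iff a⁺).mp rfl
  refine ⟨a⁺, ⟨fun m => ⟨_, two_mul_posPart_eq_toNat (two_mul_a m)⟩, ?_, posPart_disjoint,
    (eq_sum_smul_iff hqI P _).mpr fun k => (posPart_sub k).symm⟩, ?_⟩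
  · have a_zero : a 0 = 0 := by
      have h := a_neg 0
      rw [neg_zero] at h
      linarith
    rw [Finsupp.posPart_apply, a_zero, posPart_zero]
  · rintro n ⟨half_int, -, disjoint, rfl⟩
    refine (normal_form_iff n).mpr ⟨fun m => ?_, disjoint, fun k => ?_⟩
    · obtain ⟨k, hk⟩ := half_int m
      linarith [(k.cast_nonneg : (0 : ℚ) ≤ k)]
    · exact ((eq_sum_smul_iff hqI _ n).mp rfl k).symm
end

section
/- Let G be a commutative group written multiplicatively, let x ∈ G, let μ be a positive integer and ν an integer coprime to μ. For f ∈ G define R(f) ∈ ℤ[G] by R(f) = Σ_{k∈N₁(μ,ν)} ([x·f^{μ−k}] − [f^{k}] + [f^{k−μ}] − [x·f^{−k}]) − Σ_{k∈N₂(μ,ν)} ([f^{μ−k}] − [x·f^{k}] + [x·f^{k−μ}] − [f^{−k}]). Then replacing f by its inverse negates this element: R(f⁻¹) = −R(f). (This is the claim that the relation R_a changes sign under reversal of the orientation of the exceptional fiber, which makes the quotient module used to define the invariant S̃_K well defined.) -/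
open scoped Classical in
/-- `N₁(μ,ν)` : the set of `k ∈ {1,…,μ}` such that the fractional part of
`kν/μ` lies in `(0, 1/2]` (equivalently, `(2πkν/μ) mod 2π ∈ (0, π]`). -/
noncomputable def N1 (μ ν : ℤ) : Finset ℤ :=
  (Finset.Icc 1 μ).filter fun k =>
    0 < Int.fract (((k * ν : ℤ) : ℚ) / (μ : ℚ)) ∧
      Int.fract (((k * ν : ℤ) : ℚ) / (μ : ℚ)) ≤ 1 / 2

open scoped Classical in
/-- `N₂(μ,ν)` : the set of `k ∈ {1,…,μ}` such that the fractional part of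
`kν/μ` lies in `(0, 1/2)` (equivalently, `(2πkν/μ) mod 2π ∈ (0, π)`). -/
noncomputable def N2 (μ ν : ℤ) : Finset ℤ :=
  (Finset.Icc 1 μ).filter fun k =>
    0 < Int.fract (((k * ν : ℤ) : ℚ) / (μ : ℚ)) ∧
      Int.fract (((k * ν : ℤ) : ℚ) / (μ : ℚ)) < 1 / 2

/-- The relation element `R(f) ∈ ℤ[G]` associated to an exceptional fiber of
type `(μ,ν)`:
`R(f) = ∑_{k∈N₁(μ,ν)} ([x f^{μ-k}] - [f^k] + [f^{k-μ}] - [x f^{-k}])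
      - ∑_{k∈N₂(μ,ν)} ([f^{μ-k}] - [x f^k] + [x f^{k-μ}] - [f^{-k}])`. -/
noncomputable def fiberRel {G : Type*} [CommGroup G] (x : G) (μ ν : ℤ) (f : G) :
    MonoidAlgebra ℤ G :=
  (∑ k ∈ N1 μ ν,
      (MonoidAlgebra.of ℤ G (x * f ^ (μ - k)) - MonoidAlgebra.of ℤ G (f ^ k) +
        MonoidAlgebra.of ℤ G (f ^ (k - μ)) - MonoidAlgebra.of ℤ G (x * f ^ (-k)))) -
    ∑ k ∈ N2 μ ν,
      (MonoidAlgebra.of ℤ G (f ^ (μ - k)) - MonoidAlgebra.of ℤ G (x * f ^ k) +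
        MonoidAlgebra.of ℤ G (x * f ^ (k - μ)) - MonoidAlgebra.of ℤ G (f ^ (-k)))

/-- Reversing the orientation of the exceptional fiber (replacing `f` by `f⁻¹`)
negates the relation element: `R(f⁻¹) = -R(f)`. This makes the quotient module
used to define the invariant `S̃_K` well defined. -/
theorem Rel_inv_eq_neg {G : Type*} [CommGroup G] (x : G) (μ ν : ℤ)
    (hμ : 0 < μ) (hco : Int.gcd μ ν = 1) (f : G) :
    fiberRel x μ ν f⁻¹ = -fiberRel x μ ν f := by
  classical
  set S : ℤ → MonoidAlgebra ℤ G := fun k =>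
    MonoidAlgebra.of ℤ G (x * f ^ (μ - k)) + MonoidAlgebra.of ℤ G (x * f ^ (k - μ)) -
      MonoidAlgebra.of ℤ G (x * f ^ (-k)) - MonoidAlgebra.of ℤ G (x * f ^ k) +
      MonoidAlgebra.of ℤ G (f ^ (μ - k)) + MonoidAlgebra.of ℤ G (f ^ (k - μ)) -
      MonoidAlgebra.of ℤ G (f ^ k) - MonoidAlgebra.of ℤ G (f ^ (-k)) with hS
  have hμ0 : (μ : ℚ) ≠ 0 := by exact_mod_cast hμ.ne'
  -- N2 ⊆ N1
  have hsub : N2 μ ν ⊆ N1 μ ν := by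
    intro k hk
    simp only [N1, N2, Finset.mem_filter] at *
    exact ⟨hk.1, hk.2.1, hk.2.2.le⟩
  -- key algebraic identity
  have key : fiberRel x μ ν f⁻¹ + fiberRel x μ ν f =
      (∑ k ∈ N1 μ ν, S k) - ∑ k ∈ N2 μ ν, S k := by
    unfold fiberRel
    simp only [inv_zpow, ← zpow_neg, neg_sub, neg_neg]
    rw [sub_add_sub_comm, ← Finset.sum_add_distrib, ← Finset.sum_add_distrib]
    refine congrArg₂ (· - ·) (Finset.sum_congr rfl fun k _ => ?_)
      (Finset.sum_congr rfl fun k _ => ?_) <;> · rw [hS]; abel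
  -- the sum over N1 \ N2 vanishes
  have hzero : ∑ k ∈ N1 μ ν \ N2 μ ν, S k = 0 := by
    refine Finset.sum_involution (fun k _ => μ - k) ?_ ?_ ?_ ?_
    · intro k _
      have h1 : μ - (μ - k) = k := by ring
      have h2 : (μ - k) - μ = -k := by ring
      have h3 : -(μ - k) = k - μ := by ring
      rw [hS]
      simp only [h1, h2, h3]
      abel
    · intro k _ hSk heq
      apply hSk
      have h1 : μ - k = k := heq
      have h2 : k - μ = -k := by omega
      rw [hS]
      simp only [h1, h2]
      abel
    · intro k hk
      simp only [N1, N2, Finset.mem_sdiff, Finset.mem_filter, Finset.mem_Icc,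
        not_and, not_lt] at hk ⊢
      obtain ⟨⟨⟨hk1, hkμ⟩, hpos, hle⟩, hnot⟩ := hk
      have hhalf : Int.fract (((k * ν : ℤ) : ℚ) / (μ : ℚ)) = 1 / 2 :=
        le_antisymm hle (hnot ⟨hk1, hkμ⟩ hpos)
      have hkne : k ≠ μ := by
        intro h
        rw [h] at hhalf
        have : ((μ * ν : ℤ) : ℚ) / (μ : ℚ) = ((ν : ℤ) : ℚ) := by
          push_cast; field_simp
        rw [this, Int.fract_intCast] at hhalf
        norm_num at hhalf
      have hfr : Int.fract ((((μ - k) * ν : ℤ) : ℚ) / (μ : ℚ)) = 1 / 2 := by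
        have hq : (((μ - k) * ν : ℤ) : ℚ) / (μ : ℚ) =
            ((ν : ℤ) : ℚ) + -(((k * ν : ℤ) : ℚ) / (μ : ℚ)) := by
          push_cast; field_simp; ring
        rw [hq, Int.fract_intCast_add, Int.fract_neg (by rw [hhalf]; norm_num), hhalf]
        norm_num
      refine ⟨⟨⟨by omega, by omega⟩, by rw [hfr]; norm_num, by rw [hfr]⟩, ?_⟩
      intro _ _
      rw [hfr]
    · intro k _; ring
  rw [← Finset.sum_sdiff_eq_sub hsub, hzero] at key
  exact eq_neg_of_add_eq_zero_left key
end
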